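/- Let A, B, C be nonzero complex numbers; assume ‖B‖²/2 + Re(A·conj(C)) > 0, Re(A·conj(B)) > 0, Re(B·conj(C)) > 0, and let α = min(‖A‖², ‖B‖²/2 + Re(A·conj(C)), ‖C‖², Re(A·conj(B)), Re(B·conj(C))) > 0. Then for all nonnegative integers q₁, q₂: ‖A q₁² + B q₁ q₂ + C q₂²‖ ≥ (√α/√2) (q₁ + q₂)². -/

import Mathlib

open ComplexConjugate

lemma expand_norm_sq (A B C : ℂ) (x y : ℝ) :
    ‖A * (x:ℂ) ^ 2 + B * (x:ℂ) * (y:ℂ) + C * (y:ℂ) ^ 2‖ ^ 2 =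
      ‖A‖ ^ 2 * x ^ 4 + (‖B‖ ^ 2 + 2 * (A * conj C).re) * (x ^ 2 * y ^ 2)
        + ‖C‖ ^ 2 * y ^ 4 + 2 * (A * conj B).re * (x ^ 3 * y)
        + 2 * (B * conj C).re * (x * y ^ 3) := by
  simp only [Complex.sq_norm, ← Complex.ofReal_pow, Complex.normSq_apply, Complex.add_re,
    Complex.add_im, Complex.mul_re, Complex.mul_im, Complex.ofReal_re, Complex.ofReal_im,
    Complex.conj_re, Complex.conj_im]
  ring

/-- Non-parabolic estimate (Theorem 8.3): for nonzero `A, B, C` with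
`‖B‖²/2 + Re(A·conj C) > 0`, `Re(A·conj B) > 0`, `Re(B·conj C) > 0` and
`α = min(‖A‖², ‖B‖²/2 + Re(A·conj C), ‖C‖², Re(A·conj B), Re(B·conj C))`, we have `α > 0` and
for all nonnegative integers `q₁, q₂`,
`‖A q₁² + B q₁ q₂ + C q₂²‖ ≥ (√α/√2)(q₁+q₂)²`. -/
theorem nonparabolic_indicial_estimate (A B C : ℂ) (hA : A ≠ 0) (hB : B ≠ 0) (hC : C ≠ 0)
    (h1 : 0 < ‖B‖ ^ 2 / 2 + (A * conj C).re)
    (h2 : 0 < (A * conj B).re)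
    (h3 : 0 < (B * conj C).re) :
    0 < min (min (min (min (‖A‖ ^ 2) (‖B‖ ^ 2 / 2 + (A * conj C).re)) (‖C‖ ^ 2))
        ((A * conj B).re)) ((B * conj C).re) ∧
    ∀ q₁ q₂ : ℕ,
      Real.sqrt (min (min (min (min (‖A‖ ^ 2) (‖B‖ ^ 2 / 2 + (A * conj C).re)) (‖C‖ ^ 2))
            ((A * conj B).re)) ((B * conj C).re)) / Real.sqrt 2 * ((q₁ : ℝ) + q₂) ^ 2 ≤
        ‖A * (q₁ : ℂ) ^ 2 + B * (q₁ : ℂ) * (q₂ : ℂ) + C * (q₂ : ℂ) ^ 2‖ := by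
  set α := min (min (min (min (‖A‖ ^ 2) (‖B‖ ^ 2 / 2 + (A * conj C).re)) (‖C‖ ^ 2))
        ((A * conj B).re)) ((B * conj C).re) with hα
  have hApos : 0 < ‖A‖ ^ 2 := pow_pos (norm_pos_iff.mpr hA) 2
  have hCpos : 0 < ‖C‖ ^ 2 := pow_pos (norm_pos_iff.mpr hC) 2
  have hαpos : 0 < α := by
    simp only [hα, lt_min_iff]
    exact ⟨⟨⟨⟨hApos, h1⟩, hCpos⟩, h2⟩, h3⟩
  refine ⟨hαpos, fun q₁ q₂ => ?_⟩
  set x := (q₁ : ℝ)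
  set y := (q₂ : ℝ)
  have hx : 0 ≤ x := Nat.cast_nonneg _
  have hy : 0 ≤ y := Nat.cast_nonneg _
  have hαA : α ≤ ‖A‖ ^ 2 := by simp [hα, min_le_iff]
  have hαB : α ≤ ‖B‖ ^ 2 / 2 + (A * conj C).re := by simp [hα, min_le_iff]
  have hαC : α ≤ ‖C‖ ^ 2 := by simp [hα, min_le_iff]
  have hαAB : α ≤ (A * conj B).re := by simp [hα, min_le_iff]
  have hαBC : α ≤ (B * conj C).re := by simp [hα, min_le_iff]
  have key : α / 2 * ((x + y) ^ 2) ^ 2 ≤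
      ‖A * (x:ℂ) ^ 2 + B * (x:ℂ) * (y:ℂ) + C * (y:ℂ) ^ 2‖ ^ 2 := by
    rw [expand_norm_sq]
    have t1 : α * x ^ 4 ≤ ‖A‖ ^ 2 * x ^ 4 :=
      mul_le_mul_of_nonneg_right hαA (by positivity)
    have t2 : 2 * α * (x ^ 2 * y ^ 2) ≤ (‖B‖ ^ 2 + 2 * (A * conj C).re) * (x ^ 2 * y ^ 2) := by
      apply mul_le_mul_of_nonneg_right _ (by positivity)
      linarith
    have t3 : α * y ^ 4 ≤ ‖C‖ ^ 2 * y ^ 4 :=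
      mul_le_mul_of_nonneg_right hαC (by positivity)
    have t4 : 2 * α * (x ^ 3 * y) ≤ 2 * (A * conj B).re * (x ^ 3 * y) := by
      apply mul_le_mul_of_nonneg_right _ (by positivity)
      linarith
    have t5 : 2 * α * (x * y ^ 3) ≤ 2 * (B * conj C).re * (x * y ^ 3) := by
      apply mul_le_mul_of_nonneg_right _ (by positivity)
      linarith
    nlinarith [mul_nonneg hαpos.le (mul_nonneg (sq_nonneg (x + y)) (sq_nonneg (x - y)))]
  calc Real.sqrt α / Real.sqrt 2 * (x + y) ^ 2
      = Real.sqrt (α / 2 * ((x + y) ^ 2) ^ 2) := by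
        rw [Real.sqrt_mul (by positivity), Real.sqrt_sq (by positivity),
          Real.sqrt_div hαpos.le]
    _ ≤ Real.sqrt (‖A * (x:ℂ) ^ 2 + B * (x:ℂ) * (y:ℂ) + C * (y:ℂ) ^ 2‖ ^ 2) :=
        Real.sqrt_le_sqrt key
    _ = ‖A * (x:ℂ) ^ 2 + B * (x:ℂ) * (y:ℂ) + C * (y:ℂ) ^ 2‖ :=
        Real.sqrt_sq (norm_nonneg _)
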